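/- arXiv:1805.02111 — 4 statements merged into one kernel-verified Lean document; each statement's English description precedes it below -/
import Mathlib

section
/- In ℝ³, let S be the cone {(x,y,z) : x² + y² = k²z²} with k > 0, and let ρ be the plane z = m·y + h with h ≠ 0 and 0 < m·k < 1. Then the intersection S ∩ ρ is an ellipse; moreover every point P ∈ S ∩ ρ satisfies |P - F₁| + |P - F₂| = constant for two points F₁, F₂ ∈ ρ. -/
/-!
In orthonormal coordinates `(x, u)` of the plane, centred at the point with
`y = y₀ = k²mh / (1 - m²k²)`, the section is the ellipse
`x² + (1 - e²) u² = a² (1 - e²)` with eccentricity `e = m √(1 + k²) / √(1 + m²) < 1`.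
On it the distances to the foci `u = ± a e` are the focal radii `a ∓ e u`, which sum to `2a`.
-/

lemma ellipse_focal_radius {a e x u : ℝ} (ha : 0 ≤ a) (he : e ^ 2 < 1)
    (h : x ^ 2 + (1 - e ^ 2) * u ^ 2 = a ^ 2 * (1 - e ^ 2)) :
    √(x ^ 2 + (u - a * e) ^ 2) = a - e * u := by
  have hu : u ^ 2 ≤ a ^ 2 := by nlinarith [sq_nonneg x]
  have heu : e * u ≤ a := by
    refine abs_le_of_sq_le_sq' ?_ ha |>.2
    nlinarith [sq_nonneg u]
  rw [← Real.sqrt_sq (sub_nonneg.2 heu)]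
  congr 1
  linear_combination h

lemma ellipse_focal_sum {a e x u : ℝ} (ha : 0 ≤ a) (he : e ^ 2 < 1)
    (h : x ^ 2 + (1 - e ^ 2) * u ^ 2 = a ^ 2 * (1 - e ^ 2)) :
    √(x ^ 2 + (u - a * e) ^ 2) + √(x ^ 2 + (u + a * e) ^ 2) = 2 * a := by
  have h' := ellipse_focal_radius (x := x) (u := u) (e := -e) ha (by rwa [neg_sq]) (by rwa [neg_sq])
  rw [mul_neg, sub_neg_eq_add] at h'
  rw [ellipse_focal_radius ha he h, h']
  ring

/-- The point with orthonormal coordinates `(x, u)` in the plane `z = m y + h`, relative to the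
origin `(0, y₀, m y₀ + h)` and the unit vectors `(1, 0, 0)` and `(0, 1, m) / √(1 + m²)`. -/
noncomputable def planeChart (m h y₀ x u : ℝ) : EuclideanSpace ℝ (Fin 3) :=
  !₂[x, y₀ + u / √(1 + m ^ 2), m * (y₀ + u / √(1 + m ^ 2)) + h]

section
variable {m h y₀ : ℝ}

@[simp] lemma planeChart_zero (x u : ℝ) : planeChart m h y₀ x u 0 = x := rfl
@[simp] lemma planeChart_one (x u : ℝ) : planeChart m h y₀ x u 1 = y₀ + u / √(1 + m ^ 2) := rfl
@[simp] lemma planeChart_two (x u : ℝ) :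
    planeChart m h y₀ x u 2 = m * (y₀ + u / √(1 + m ^ 2)) + h := rfl

lemma dist_planeChart (x u x' u' : ℝ) :
    dist (planeChart m h y₀ x u) (planeChart m h y₀ x' u') = √((x - x') ^ 2 + (u - u') ^ 2) := by
  have hs : √(1 + m ^ 2) ^ 2 = 1 + m ^ 2 := Real.sq_sqrt (by positivity)
  have hs0 : √(1 + m ^ 2) ≠ 0 := by positivity
  rw [EuclideanSpace.dist_eq, Fin.sum_univ_three]
  simp only [planeChart_zero, planeChart_one, planeChart_two, Real.dist_eq, sq_abs]
  congr 1
  field_simp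
  linear_combination -(u - u') ^ 2 * hs

lemma planeChart_coords {P : EuclideanSpace ℝ (Fin 3)} (hP : P 2 = m * P 1 + h) :
    planeChart m h y₀ (P 0) (√(1 + m ^ 2) * (P 1 - y₀)) = P := by
  have hs0 : √(1 + m ^ 2) ≠ 0 := by positivity
  ext i
  fin_cases i <;> simp [hP, hs0]
end

section
variable (k m h : ℝ)

noncomputable def coneSectionCenterY : ℝ := k ^ 2 * m * h / (1 - m ^ 2 * k ^ 2)

noncomputable def coneSectionEccentricity : ℝ := m * √(1 + k ^ 2) / √(1 + m ^ 2)

noncomputable def coneSectionSemiMajor : ℝ := √(1 + m ^ 2) * |k * h| / (1 - m ^ 2 * k ^ 2)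

variable {k m h}

lemma one_sub_coneSectionEccentricity_sq :
    1 - coneSectionEccentricity k m ^ 2 = (1 - m ^ 2 * k ^ 2) / (1 + m ^ 2) := by
  rw [coneSectionEccentricity, div_pow, mul_pow, Real.sq_sqrt (by positivity),
    Real.sq_sqrt (by positivity)]
  field_simp
  ring

lemma coneSectionEccentricity_sq_lt_one (hmk : m ^ 2 * k ^ 2 < 1) :
    coneSectionEccentricity k m ^ 2 < 1 := by
  have : 0 < (1 - m ^ 2 * k ^ 2) / (1 + m ^ 2) := div_pos (by linarith) (by positivity)
  linarith [one_sub_coneSectionEccentricity_sq (k := k) (m := m)]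

lemma coneSectionSemiMajor_pos (hk : k ≠ 0) (hh : h ≠ 0) (hmk : m ^ 2 * k ^ 2 < 1) :
    0 < coneSectionSemiMajor k m h := by
  have : 0 < 1 - m ^ 2 * k ^ 2 := by linarith
  unfold coneSectionSemiMajor
  positivity

lemma sq_add_mul_sq_sub_coneSectionCenterY {x y : ℝ} (hmk : m ^ 2 * k ^ 2 ≠ 1)
    (hP : x ^ 2 + y ^ 2 = k ^ 2 * (m * y + h) ^ 2) :
    x ^ 2 + (1 - m ^ 2 * k ^ 2) * (y - coneSectionCenterY k m h) ^ 2 =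
      k ^ 2 * h ^ 2 / (1 - m ^ 2 * k ^ 2) := by
  have hc : 1 - m ^ 2 * k ^ 2 ≠ 0 := sub_ne_zero.2 hmk.symm
  rw [coneSectionCenterY]
  field_simp
  linear_combination (1 - m ^ 2 * k ^ 2) * hP

lemma ellipse_of_planeChart_mem_cone (hmk : m ^ 2 * k ^ 2 < 1) {x u : ℝ}
    (hP : x ^ 2 + planeChart m h (coneSectionCenterY k m h) x u 1 ^ 2 =
      k ^ 2 * planeChart m h (coneSectionCenterY k m h) x u 2 ^ 2) :
    x ^ 2 + (1 - coneSectionEccentricity k m ^ 2) * u ^ 2 =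
      coneSectionSemiMajor k m h ^ 2 * (1 - coneSectionEccentricity k m ^ 2) := by
  have hc : 1 - m ^ 2 * k ^ 2 ≠ 0 := by linarith
  have hs : √(1 + m ^ 2) ^ 2 = 1 + m ^ 2 := Real.sq_sqrt (by positivity)
  have hs0 : √(1 + m ^ 2) ≠ 0 := by positivity
  have hsec := sq_add_mul_sq_sub_coneSectionCenterY hmk.ne hP
  rw [planeChart_one, add_sub_cancel_left] at hsec
  rw [one_sub_coneSectionEccentricity_sq, coneSectionSemiMajor, div_pow, mul_pow, hs, sq_abs]
  field_simp at hsec ⊢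
  rw [hs] at hsec
  linear_combination hsec
end

theorem cone_section_ellipse_general (k m h : ℝ) (hh : h ≠ 0)
    (hmk₀ : 0 < m * k) (hmk₁ : m * k < 1) :
    ∃ (F₁ F₂ : EuclideanSpace ℝ (Fin 3)) (d : ℝ), 0 < d ∧
      F₁ 2 = m * F₁ 1 + h ∧ F₂ 2 = m * F₂ 1 + h ∧
      ∀ P : EuclideanSpace ℝ (Fin 3),
        (P 0) ^ 2 + (P 1) ^ 2 = k ^ 2 * (P 2) ^ 2 → P 2 = m * P 1 + h →
        dist P F₁ + dist P F₂ = d := by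
  have hmk : m ^ 2 * k ^ 2 < 1 := by nlinarith
  set a := coneSectionSemiMajor k m h
  set e := coneSectionEccentricity k m
  set y₀ := coneSectionCenterY k m h
  have ha : 0 < a := coneSectionSemiMajor_pos (right_ne_zero_of_mul hmk₀.ne') hh hmk
  refine ⟨planeChart m h y₀ 0 (a * e), planeChart m h y₀ 0 (-(a * e)), 2 * a, by positivity,
    rfl, rfl, fun P hcone hplane => ?_⟩
  rw [← planeChart_coords (y₀ := y₀) hplane] at hcone ⊢
  rw [dist_planeChart, dist_planeChart]
  simpa using ellipse_focal_sum ha.le (coneSectionEccentricity_sq_lt_one hmk)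
    (ellipse_of_planeChart_mem_cone hmk hcone)

/-- Dandelin: the section of the cone `x² + y² = k²z²` by the plane `z = m·y + h`
(`h ≠ 0`, `0 < m·k < 1`) is an ellipse: there are two points `F₁`, `F₂` in the plane
and a constant `d > 0` such that every point of the section has sum of distances `d`
to `F₁` and `F₂`. -/
theorem cone_section_ellipse (k m h : ℝ) (hk : 0 < k) (hh : h ≠ 0)
    (hmk₀ : 0 < m * k) (hmk₁ : m * k < 1) :
    ∃ (F₁ F₂ : EuclideanSpace ℝ (Fin 3)) (d : ℝ), 0 < d ∧
      F₁ 2 = m * F₁ 1 + h ∧ F₂ 2 = m * F₂ 1 + h ∧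
      ∀ P : EuclideanSpace ℝ (Fin 3),
        (P 0) ^ 2 + (P 1) ^ 2 = k ^ 2 * (P 2) ^ 2 → P 2 = m * P 1 + h →
        dist P F₁ + dist P F₂ = d :=
  cone_section_ellipse_general k m h hh hmk₀ hmk₁
end

section
/- In ℝ³, let S be the cone {(x,y,z) : x² + y² = k²z²} with k > 0, and let ρ be the plane z = m·y + h with h ≠ 0 and m·k > 1. Then for every point P in S ∩ ρ there exist fixed points F₁, F₂ ∈ ρ and a constant d > 0 (depending only on S and ρ) with ||P - F₁| - |P - F₂|| = d, i.e., the section is (contained in) a hyperbola. -/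
/-!
In the plane `z = m y + h`, use `x` and the rescaled coordinate `w = √(1 + m²) (y - y₀)`, which
together are isometric coordinates on the plane. Completing the square in the cone equation shows
that the section is the hyperbola `x² = (e² - 1) (w² - A²)` with eccentricity `e > 1`. For such a
curve the distance to the focus `(w, x) = (e t, 0)`, `t = ±A`, is `|e w - t|`, and on both branches
`|e w| ≥ A`, so the two focal distances differ by exactly `2 A`.
-/

open Real

theorem abs_abs_sub_sub_abs_add_of_abs_le {u a : ℝ} (h : |a| ≤ |u|) :
    |(|u - a| - |u + a|)| = 2 * |a| := by
  have hsq : a ^ 2 ≤ u ^ 2 := sq_le_sq.mpr h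
  rw [← sq_eq_sq₀ (abs_nonneg _) (by positivity), sq_abs, sub_sq, sq_abs, sq_abs,
    mul_assoc, ← abs_mul, show (u - a) * (u + a) = u ^ 2 - a ^ 2 by ring,
    abs_of_nonneg (sub_nonneg.mpr hsq), mul_pow, sq_abs]
  ring

theorem hyperbola_focal_sq {e A t w x : ℝ} (ht : t ^ 2 = A ^ 2)
    (hx : x ^ 2 = (e ^ 2 - 1) * (w ^ 2 - A ^ 2)) :
    (w - e * t) ^ 2 + x ^ 2 = (e * w - t) ^ 2 := by
  linear_combination hx + (e ^ 2 - 1) * ht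

theorem abs_le_abs_mul_of_hyperbola {e A w x : ℝ} (he : 1 < e)
    (hx : x ^ 2 = (e ^ 2 - 1) * (w ^ 2 - A ^ 2)) : |A| ≤ |e * w| := by
  have he2 : 0 < e ^ 2 - 1 := by nlinarith
  have hA : 0 ≤ w ^ 2 - A ^ 2 := (mul_nonneg_iff_of_pos_left he2).mp (hx ▸ sq_nonneg x)
  exact sq_le_sq.mp (by nlinarith [mul_nonneg he2.le (sq_nonneg w)])

def planePoint (m h y : ℝ) : EuclideanSpace ℝ (Fin 3) := !₂[0, y, m * y + h]

theorem planePoint_mem_plane (m h y : ℝ) :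
    planePoint m h y 2 = m * planePoint m h y 1 + h := by
  simp [planePoint]

theorem dist_sq_of_mem_plane {m h : ℝ} {P Q : EuclideanSpace ℝ (Fin 3)}
    (hP : P 2 = m * P 1 + h) (hQ : Q 2 = m * Q 1 + h) :
    dist P Q ^ 2 = (P 0 - Q 0) ^ 2 + (1 + m ^ 2) * (P 1 - Q 1) ^ 2 := by
  rw [EuclideanSpace.dist_eq, sq_sqrt (by positivity), Fin.sum_univ_three]
  simp only [Real.dist_eq, sq_abs, hP, hQ]
  ring

theorem cone_section_eq_hyperbola {k m h : ℝ} (hh : h ≠ 0) (hmk : m * k > 1) :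
    ∃ y₀ e A : ℝ, 1 < e ∧ 0 < A ∧ ∀ P : EuclideanSpace ℝ (Fin 3),
      (P 0) ^ 2 + (P 1) ^ 2 = k ^ 2 * (P 2) ^ 2 → P 2 = m * P 1 + h →
      (P 0) ^ 2 = (e ^ 2 - 1) * ((√(1 + m ^ 2) * (P 1 - y₀)) ^ 2 - A ^ 2) := by
  set q := k ^ 2 * m ^ 2 - 1
  have hq : 0 < q := by nlinarith
  have hk : k ≠ 0 := by rintro rfl; linarith
  refine ⟨-(k ^ 2 * m * h) / q, √(m ^ 2 * (1 + k ^ 2) / (1 + m ^ 2)),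
    √(k ^ 2 * h ^ 2 * (1 + m ^ 2)) / q, ?_, by positivity, fun P hcone hplane => ?_⟩
  · rw [lt_sqrt zero_le_one, one_pow, one_lt_div (by positivity)]
    linarith
  · rw [mul_pow, div_pow, sq_sqrt (by positivity), sq_sqrt (by positivity),
      sq_sqrt (by positivity)]
    rw [hplane] at hcone
    field_simp
    linear_combination q ^ 2 * hcone

theorem dist_focus_eq_of_hyperbola {m h y₀ e A t : ℝ} {P : EuclideanSpace ℝ (Fin 3)}
    (hP : P 2 = m * P 1 + h) (ht : t ^ 2 = A ^ 2)
    (hx : (P 0) ^ 2 = (e ^ 2 - 1) * ((√(1 + m ^ 2) * (P 1 - y₀)) ^ 2 - A ^ 2)) :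
    dist P (planePoint m h (y₀ + e * t / √(1 + m ^ 2))) =
      |e * (√(1 + m ^ 2) * (P 1 - y₀)) - t| := by
  rw [← sqrt_sq_eq_abs, ← hyperbola_focal_sq ht hx, ← sqrt_sq dist_nonneg,
    dist_sq_of_mem_plane hP (planePoint_mem_plane ..)]
  congr 1
  set r := √(1 + m ^ 2)
  have hr : r ≠ 0 := by positivity
  rw [← sq_sqrt (by positivity : 0 ≤ 1 + m ^ 2)]
  simp only [planePoint, PiLp.toLp_apply, Matrix.cons_val]
  field_simp
  ring

theorem cone_section_hyperbola_general (k m h : ℝ) (hh : h ≠ 0)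
    (hmk : m * k > 1) :
    ∃ (F₁ F₂ : EuclideanSpace ℝ (Fin 3)) (d : ℝ), 0 < d ∧
      F₁ 2 = m * F₁ 1 + h ∧ F₂ 2 = m * F₂ 1 + h ∧
      ∀ P : EuclideanSpace ℝ (Fin 3),
        (P 0) ^ 2 + (P 1) ^ 2 = k ^ 2 * (P 2) ^ 2 → P 2 = m * P 1 + h →
        |dist P F₁ - dist P F₂| = d := by
  obtain ⟨y₀, e, A, he, hA, hsection⟩ := cone_section_eq_hyperbola hh hmk
  set F := fun t => planePoint m h (y₀ + e * t / √(1 + m ^ 2))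
  refine ⟨F A, F (-A), 2 * A, by positivity, planePoint_mem_plane .., planePoint_mem_plane ..,
    fun P hcone hplane => ?_⟩
  have hx := hsection P hcone hplane
  rw [dist_focus_eq_of_hyperbola (t := A) hplane rfl hx,
    dist_focus_eq_of_hyperbola (t := -A) hplane (neg_sq A) hx, sub_neg_eq_add,
    abs_abs_sub_sub_abs_add_of_abs_le (abs_le_abs_mul_of_hyperbola he hx), abs_of_pos hA]

/-- Dandelin: the section of the cone `x² + y² = k²z²` by the plane `z = m·y + h`
(`h ≠ 0`, `m·k > 1`) is contained in a hyperbola: there are two points `F₁`, `F₂` in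
the plane and a constant `d > 0` such that every point of the section has absolute
difference of distances `d` to `F₁` and `F₂`. -/
theorem cone_section_hyperbola (k m h : ℝ) (hk : 0 < k) (hh : h ≠ 0)
    (hmk : m * k > 1) :
    ∃ (F₁ F₂ : EuclideanSpace ℝ (Fin 3)) (d : ℝ), 0 < d ∧
      F₁ 2 = m * F₁ 1 + h ∧ F₂ 2 = m * F₂ 1 + h ∧
      ∀ P : EuclideanSpace ℝ (Fin 3),
        (P 0) ^ 2 + (P 1) ^ 2 = k ^ 2 * (P 2) ^ 2 → P 2 = m * P 1 + h →
        |dist P F₁ - dist P F₂| = d :=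
  cone_section_hyperbola_general k m h hh hmk
end

section
/- Let A = (-f, 0), B = (f, 0) with f > 0 and let F₁ = (-v, 0), F₂ = (v, 0) with 0 < v < f. Let r_a = |F₁A| = f - v and r_b = |F₁B| = f + v. For each point O = (-v, r) with 0 < r < √(r_a·r_b), the tangent line from A to the circle centered at O of radius r (other than the x-axis) and the tangent line from B to the same circle (other than the x-axis) intersect in a unique point E, and this point E satisfies |EB| - |EA| = r_b - r_a = 2v. -/
theorem mem_line_iff (P Q p : EuclideanSpace ℝ (Fin 2)) :
    p ∈ line[ℝ, P, Q] ↔ ∃ t : ℝ, p = t • (Q - P) + P := by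
  constructor
  · intro h
    have h1 : p -ᵥ P ∈ (line[ℝ, P, Q]).direction :=
      AffineSubspace.vsub_mem_direction h (left_mem_affineSpan_pair _ _ _)
    rw [direction_affineSpan, mem_vectorSpan_pair_rev] at h1
    obtain ⟨t, ht⟩ := h1
    have h2 : t • (Q - P) = p - P := by simpa using ht
    exact ⟨t, (sub_eq_iff_eq_add.mp h2.symm)⟩
  · rintro ⟨t, rfl⟩
    simpa using smul_vsub_vadd_mem_affineSpan_pair t P Q

theorem dist_coord (x y : EuclideanSpace ℝ (Fin 2)) :
    dist x y = Real.sqrt ((x 0 - y 0)^2 + (x 1 - y 1)^2) := by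
  rw [EuclideanSpace.dist_eq]
  simp [Fin.sum_univ_two, Real.dist_eq, sq_abs, sq]

theorem infDist_line_eq (P Q O : EuclideanSpace ℝ (Fin 2)) (h : P ≠ Q) :
    Metric.infDist O (line[ℝ, P, Q])
      = |(Q 0 - P 0) * (O 1 - P 1) - (Q 1 - P 1) * (O 0 - P 0)| / dist Q P := by
  set d0 := Q 0 - P 0 with hd0
  set d1 := Q 1 - P 1 with hd1
  set w0 := O 0 - P 0 with hw0
  set w1 := O 1 - P 1 with hw1
  set c := d0 * w1 - d1 * w0 with hc
  have hnd2 : 0 < d0^2 + d1^2 := by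
    rcases lt_or_eq_of_le (by positivity : (0:ℝ) ≤ d0^2 + d1^2) with h' | h'
    · exact h'
    · exfalso
      apply h
      have h0 : d0 = 0 := by nlinarith [sq_nonneg d0, sq_nonneg d1]
      have h1 : d1 = 0 := by nlinarith [sq_nonneg d0, sq_nonneg d1]
      apply PiLp.ext; intro i
      fin_cases i
      · show P 0 = Q 0; have := sub_eq_zero.mp h0; linarith
      · show P 1 = Q 1; have := sub_eq_zero.mp h1; linarith
  have hdQP : dist Q P = Real.sqrt (d0^2 + d1^2) := by
    rw [dist_coord]
  have hdist : ∀ t : ℝ, dist O (t • (Q - P) + P)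
      = Real.sqrt ((w0 - t * d0)^2 + (w1 - t * d1)^2) := by
    intro t
    rw [dist_coord]
    congr 2 <;> · simp [hw0, hw1, hd0, hd1]; ring
  have key : ∀ t : ℝ, (d0^2 + d1^2) * ((w0 - t * d0)^2 + (w1 - t * d1)^2)
      = c^2 + (d0 * (w0 - t * d0) + d1 * (w1 - t * d1))^2 := by
    intro t; rw [hc]; ring
  apply le_antisymm
  · set t0 := (w0 * d0 + w1 * d1) / (d0^2 + d1^2) with ht0
    have hmem : t0 • (Q - P) + P ∈ line[ℝ, P, Q] := (mem_line_iff P Q _).2 ⟨t0, rfl⟩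
    have heq : dist O (t0 • (Q - P) + P) = |c| / dist Q P := by
      rw [hdist, hdQP]
      have hS : (w0 - t0 * d0)^2 + (w1 - t0 * d1)^2 = c^2 / (d0^2 + d1^2) := by
        rw [ht0, hc]; field_simp; ring
      rw [hS, Real.sqrt_div' _ (by positivity), Real.sqrt_sq_eq_abs]
    calc Metric.infDist O (line[ℝ, P, Q]) ≤ dist O (t0 • (Q - P) + P) :=
          Metric.infDist_le_dist_of_mem hmem
      _ = _ := heq
  · apply le_of_not_gt
    intro hlt
    obtain ⟨p, hpmem, hplt⟩ := (Metric.infDist_lt_iff ⟨P, left_mem_affineSpan_pair ℝ P Q⟩).1 hlt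
    obtain ⟨t, rfl⟩ := (mem_line_iff P Q p).1 hpmem
    rw [hdist] at hplt
    have hle : |c| / dist Q P ≤ Real.sqrt ((w0 - t * d0)^2 + (w1 - t * d1)^2) := by
      rw [hdQP, div_le_iff₀ (Real.sqrt_pos.2 hnd2)]
      have habs : |c| = Real.sqrt (c^2) := (Real.sqrt_sq_eq_abs c).symm
      rw [habs, ← Real.sqrt_mul (by positivity), mul_comm]
      apply Real.sqrt_le_sqrt
      rw [key t]
      nlinarith [sq_nonneg (d0 * (w0 - t * d0) + d1 * (w1 - t * d1))]
    exact absurd hplt (not_lt.2 hle)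

/-- For the circle of radius `r` tangent to the x-axis at `F₁ = (-v,0)` (center
`O = (-v,r)`), with `0 < r < √(r_a·r_b)` where `r_a = f - v`, `r_b = f + v`, the
second tangent lines from `A = (-f,0)` and `B = (f,0)` meet in a unique point `E`,
and every such intersection point satisfies `|EB| - |EA| = r_b - r_a = 2v`. -/
theorem cone_vertex_exists_unique (f v r : ℝ) (hv : 0 < v) (hvf : v < f)
    (hr : 0 < r) (hrmax : r < Real.sqrt ((f - v) * (f + v)))
    (A B O : EuclideanSpace ℝ (Fin 2))
    (hA : A = ![-f, 0]) (hB : B = ![f, 0]) (hO : O = ![-v, r]) :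
    (∃! E : EuclideanSpace ℝ (Fin 2), E 1 ≠ 0 ∧
        Metric.infDist O (line[ℝ, A, E] : Set (EuclideanSpace ℝ (Fin 2))) = r ∧
        Metric.infDist O (line[ℝ, B, E] : Set (EuclideanSpace ℝ (Fin 2))) = r) ∧
    ∀ E : EuclideanSpace ℝ (Fin 2), E 1 ≠ 0 →
      Metric.infDist O (line[ℝ, A, E] : Set (EuclideanSpace ℝ (Fin 2))) = r →
      Metric.infDist O (line[ℝ, B, E] : Set (EuclideanSpace ℝ (Fin 2))) = r →
      dist E B - dist E A = 2 * v := by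
  have hf : 0 < f := lt_trans hv hvf
  have hra : 0 < f - v := by linarith
  have hrb : 0 < f + v := by linarith
  have hr2 : r^2 < (f - v) * (f + v) := (Real.lt_sqrt hr.le).mp hrmax
  set k : ℝ := (f - v) * (f + v) - r^2 with hkdef
  have hk : 0 < k := by simp only [hkdef]; linarith
  set x0 : ℝ := (-v * ((f - v) * (f + v) + r^2)) / k with hx0def
  set y0 : ℝ := (2 * r * (f - v) * (f + v)) / k with hy0def
  have hy0pos : 0 < y0 := by rw [hy0def]; positivity
  set E0 : EuclideanSpace ℝ (Fin 2) := WithLp.toLp 2 ![x0, y0] with hE0def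
  have hA0 : A 0 = -f := by rw [hA]; rfl
  have hA1 : A 1 = 0 := by rw [hA]; rfl
  have hB0 : B 0 = f := by rw [hB]; rfl
  have hB1 : B 1 = 0 := by rw [hB]; rfl
  have hO0 : O 0 = -v := by rw [hO]; rfl
  have hO1 : O 1 = r := by rw [hO]; rfl
  have hE00 : E0 0 = x0 := rfl
  have hE01 : E0 1 = y0 := rfl
  -- distance values for points with coordinates (x0, y0)
  have hdA : ∀ E : EuclideanSpace ℝ (Fin 2), E 0 = x0 → E 1 = y0 →
      dist E A = (f + v) * ((f - v)^2 + r^2) / k := by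
    intro E hx hy
    rw [dist_coord, hx, hy, hA0, hA1]
    have hS : (x0 - -f)^2 + (y0 - 0)^2 = ((f + v) * ((f - v)^2 + r^2) / k)^2 := by
      rw [hx0def, hy0def]; field_simp; ring
    rw [hS]
    exact Real.sqrt_sq (by positivity)
  have hdB : ∀ E : EuclideanSpace ℝ (Fin 2), E 0 = x0 → E 1 = y0 →
      dist E B = (f - v) * ((f + v)^2 + r^2) / k := by
    intro E hx hy
    rw [dist_coord, hx, hy, hB0, hB1]
    have hS : (x0 - f)^2 + (y0 - 0)^2 = ((f - v) * ((f + v)^2 + r^2) / k)^2 := by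
      rw [hx0def, hy0def]; field_simp; ring
    rw [hS]
    exact Real.sqrt_sq (by positivity)
  -- forward: conditions determine coordinates
  have forward : ∀ E : EuclideanSpace ℝ (Fin 2), E 1 ≠ 0 →
      Metric.infDist O (line[ℝ, A, E] : Set (EuclideanSpace ℝ (Fin 2))) = r →
      Metric.infDist O (line[ℝ, B, E] : Set (EuclideanSpace ℝ (Fin 2))) = r →
      E 0 = x0 ∧ E 1 = y0 := by
    intro E hy hIA hIB
    set x := E 0 with hx
    set y := E 1 with hyy
    have hAE : A ≠ E := by
      intro h; apply hy; rw [hyy, ← congrArg (fun p => p 1) h, hA1]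
    have hBE : B ≠ E := by
      intro h; apply hy; rw [hyy, ← congrArg (fun p => p 1) h, hB1]
    have hdApos : 0 < dist E A := dist_pos.2 (Ne.symm hAE)
    have hdBpos : 0 < dist E B := dist_pos.2 (Ne.symm hBE)
    rw [infDist_line_eq A E O hAE, hA0, hA1, hO0, hO1, ← hx, ← hyy,
      div_eq_iff hdApos.ne'] at hIA
    rw [infDist_line_eq B E O hBE, hB0, hB1, hO0, hO1, ← hx, ← hyy,
      div_eq_iff hdBpos.ne'] at hIB
    have hdA2 : (dist E A)^2 = (x + f)^2 + y^2 := by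
      rw [dist_coord, ← hx, ← hyy, hA0, hA1, Real.sq_sqrt (by positivity)]; ring
    have hdB2 : (dist E B)^2 = (x - f)^2 + y^2 := by
      rw [dist_coord, ← hx, ← hyy, hB0, hB1, Real.sq_sqrt (by positivity)]; ring
    have hsqA : ((x - -f) * (r - 0) - (y - 0) * (-v - -f))^2 = r^2 * ((x + f)^2 + y^2) := by
      rw [← sq_abs, hIA, mul_pow, hdA2]
    have hsqB : ((x - f) * (r - 0) - (y - 0) * (-v - f))^2 = r^2 * ((x - f)^2 + y^2) := by
      rw [← sq_abs, hIB, mul_pow, hdB2]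
    have e1 : y * (y * ((f - v)^2 - r^2) - 2 * r * (f - v) * (x + f)) = 0 := by
      linear_combination hsqA
    have e2 : y * (y * ((f + v)^2 - r^2) - 2 * r * (f + v) * (f - x)) = 0 := by
      linear_combination hsqB
    have eq1 : y * ((f - v)^2 - r^2) = 2 * r * (f - v) * (x + f) := by
      have := (mul_eq_zero.mp e1).resolve_left hy
      linarith [sub_eq_zero.mp this]
    have eq2 : y * ((f + v)^2 - r^2) = 2 * r * (f + v) * (f - x) := by
      have := (mul_eq_zero.mp e2).resolve_left hy
      linarith [sub_eq_zero.mp this]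
    have hyk : y * k = 2 * r * (f - v) * (f + v) := by
      have h2f : (2 * f) * (y * k) = (2 * f) * (2 * r * (f - v) * (f + v)) := by
        rw [hkdef]; linear_combination (f + v) * eq1 + (f - v) * eq2
      exact mul_left_cancel₀ (by positivity) h2f
    have hxk : x * k = -v * ((f - v) * (f + v) + r^2) := by
      have h2 : (2 * r * (f - v)) * (x * k) = (2 * r * (f - v)) * (-v * ((f - v) * (f + v) + r^2)) := by
        linear_combination (-k) * eq1 + ((f - v)^2 - r^2) * hyk + (-(2*r*(f-v)*f)) * hkdef
      exact mul_left_cancel₀ (by positivity) h2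
    constructor
    · rw [hx0def, eq_div_iff hk.ne']; exact hxk
    · rw [hy0def, eq_div_iff hk.ne']; exact hyk
  -- backward: E0 satisfies the conditions
  have hAE0 : A ≠ E0 := by
    intro h; have := congrArg (fun p => p 1) h; rw [hA1, hE01] at this; exact hy0pos.ne this
  have hBE0 : B ≠ E0 := by
    intro h; have := congrArg (fun p => p 1) h; rw [hB1, hE01] at this; exact hy0pos.ne this
  have hsatA : Metric.infDist O (line[ℝ, A, E0] : Set (EuclideanSpace ℝ (Fin 2))) = r := by
    rw [infDist_line_eq A E0 O hAE0, hA0, hA1, hO0, hO1, hE00, hE01]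
    have hcval : (x0 - -f) * (r - 0) - (y0 - 0) * (-v - -f)
        = -(r * ((f + v) * ((f - v)^2 + r^2) / k)) := by
      rw [hx0def, hy0def]; field_simp; ring
    rw [hcval, abs_neg, abs_of_nonneg (by positivity), hdA E0 rfl rfl]
    exact mul_div_cancel_right₀ r (by positivity)
  have hsatB : Metric.infDist O (line[ℝ, B, E0] : Set (EuclideanSpace ℝ (Fin 2))) = r := by
    rw [infDist_line_eq B E0 O hBE0, hB0, hB1, hO0, hO1, hE00, hE01]
    have hcval : (x0 - f) * (r - 0) - (y0 - 0) * (-v - f)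
        = r * ((f - v) * ((f + v)^2 + r^2) / k) := by
      rw [hx0def, hy0def]; field_simp; ring
    rw [hcval, abs_of_nonneg (by positivity), hdB E0 rfl rfl]
    exact mul_div_cancel_right₀ r (by positivity)
  constructor
  · refine ⟨E0, ⟨hy0pos.ne', hsatA, hsatB⟩, ?_⟩
    intro E' ⟨hy', hIA', hIB'⟩
    obtain ⟨hx', hyv'⟩ := forward E' hy' hIA' hIB'
    apply PiLp.ext; intro i
    fin_cases i
    · show E' 0 = E0 0; rw [hx', hE00]
    · show E' 1 = E0 1; rw [hyv', hE01]
  · intro E hy hIA hIB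
    obtain ⟨hx', hyv'⟩ := forward E hy hIA hIB
    rw [hdA E hx' hyv', hdB E hx' hyv']
    field_simp
    ring
end

section
/- With A = (-f,0), B = (f,0), F₁ = (-v,0), 0 < v < f, r_a = f - v, r_b = f + v: if r = √(r_a·r_b), then the second tangent line from A to the circle centered at (-v, r) of radius r and the second tangent line from B to the same circle are parallel (they do not intersect). -/
/-!
Lagrange's identity turns tangency of a line to the circle into a polynomial condition on its
direction. At `r² = (f - v)(f + v)` the second tangents from `A` and from `B` both get the slope
`-r / v`, so if they met in a point `E` they would be one line, meeting the x-axis twice.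
-/

open Metric AffineMap
open scoped RealInnerProductSpace

section LineDistance

variable {V P : Type*} [NormedAddCommGroup V] [InnerProductSpace ℝ V] [MetricSpace P]
  [NormedAddTorsor V P]

theorem dist_lineMap_sq_mul_norm_sq (A E p : P) (t : ℝ) :
    dist p (lineMap A E t) ^ 2 * ‖E -ᵥ A‖ ^ 2 =
      ‖E -ᵥ A‖ ^ 2 * ‖p -ᵥ A‖ ^ 2 - ⟪E -ᵥ A, p -ᵥ A⟫ ^ 2 +
        (⟪E -ᵥ A, p -ᵥ A⟫ - t * ‖E -ᵥ A‖ ^ 2) ^ 2 := by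
  rw [dist_eq_norm_vsub V, lineMap_apply, vsub_vadd_eq_vsub_sub, norm_sub_sq_real, norm_smul,
    inner_smul_right, real_inner_comm, Real.norm_eq_abs, mul_pow, sq_abs]
  ring

theorem infDist_affineSpan_pair_sq_mul_norm_sq (A E p : P) :
    infDist p (line[ℝ, A, E] : Set P) ^ 2 * ‖E -ᵥ A‖ ^ 2 =
      ‖E -ᵥ A‖ ^ 2 * ‖p -ᵥ A‖ ^ 2 - ⟪E -ᵥ A, p -ᵥ A⟫ ^ 2 := by
  rcases eq_or_ne A E with rfl | hAE
  · simp
  have hn : 0 < ‖E -ᵥ A‖ ^ 2 := by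
    have : E -ᵥ A ≠ 0 := vsub_ne_zero.2 hAE.symm
    positivity
  set t₀ := ⟪E -ᵥ A, p -ᵥ A⟫ / ‖E -ᵥ A‖ ^ 2
  have hfoot : dist p (lineMap A E t₀) ^ 2 * ‖E -ᵥ A‖ ^ 2 =
      ‖E -ᵥ A‖ ^ 2 * ‖p -ᵥ A‖ ^ 2 - ⟪E -ᵥ A, p -ᵥ A⟫ ^ 2 := by
    rw [dist_lineMap_sq_mul_norm_sq, div_mul_cancel₀ _ hn.ne']
    ring
  suffices infDist p (line[ℝ, A, E] : Set P) = dist p (lineMap A E t₀) by rw [this, hfoot]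
  refine le_antisymm (infDist_le_dist_of_mem (lineMap_mem_affineSpan_pair t₀ A E)) ?_
  refine (le_infDist ⟨A, left_mem_affineSpan_pair ℝ A E⟩).2 fun q hq ↦ ?_
  obtain ⟨t, rfl⟩ := mem_affineSpan_pair_iff_exists_lineMap_eq.1 hq
  refine (pow_le_pow_iff_left₀ dist_nonneg dist_nonneg two_ne_zero).1 <|
    le_of_mul_le_mul_right ?_ hn
  rw [hfoot, dist_lineMap_sq_mul_norm_sq]
  nlinarith [sq_nonneg (⟪E -ᵥ A, p -ᵥ A⟫ - t * ‖E -ᵥ A‖ ^ 2)]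

end LineDistance

theorem EuclideanSpace.norm_sq_mul_norm_sq_sub_inner_sq_fin_two (d w : EuclideanSpace ℝ (Fin 2)) :
    ‖d‖ ^ 2 * ‖w‖ ^ 2 - ⟪d, w⟫ ^ 2 = (d 0 * w 1 - d 1 * w 0) ^ 2 := by
  simp only [EuclideanSpace.norm_sq_eq, EuclideanSpace.inner_eq_star_dotProduct, Fin.sum_univ_two,
    dotProduct, Real.norm_eq_abs, sq_abs, star_trivial]
  ring

/-- The second tangent from `P` is the mirror image of the x-axis in the line `PO`, so its slope
is `tan 2θ = 2ρδ / (δ² - ρ²)` where `tan θ = ρ / δ`, `δ = O 0 - P 0`, `ρ = O 1`. -/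
theorem slope_of_infDist_affineSpan_pair_eq (P E O : EuclideanSpace ℝ (Fin 2)) (hP : P 1 = 0)
    (hE : E 1 ≠ 0)
    (h : infDist O (line[ℝ, P, E] : Set (EuclideanSpace ℝ (Fin 2))) = O 1) :
    E 1 * ((O 0 - P 0) ^ 2 - O 1 ^ 2) = 2 * O 1 * (O 0 - P 0) * (E 0 - P 0) := by
  have key := infDist_affineSpan_pair_sq_mul_norm_sq P E O
  rw [h, EuclideanSpace.norm_sq_mul_norm_sq_sub_inner_sq_fin_two, EuclideanSpace.norm_sq_eq,
    Fin.sum_univ_two] at key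
  simp only [vsub_eq_sub, PiLp.sub_apply, Real.norm_eq_abs, sq_abs, hP, sub_zero] at key
  refine mul_left_cancel₀ hE ?_
  linear_combination -key

/-- At the limiting radius `r = √(r_a·r_b) = √(f²-v²)`, the second tangent lines from
`A = (-f,0)` and `B = (f,0)` to the circle of radius `r` centered at `(-v,r)` (tangent
to the x-axis at `F₁ = (-v,0)`) are parallel: they have no common point. -/
theorem limiting_tangents_parallel (f v r : ℝ) (hv : 0 < v) (hvf : v < f)
    (hr : r = Real.sqrt ((f - v) * (f + v)))
    (A B O : EuclideanSpace ℝ (Fin 2))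
    (hA : A = ![-f, 0]) (hB : B = ![f, 0]) (hO : O = ![-v, r]) :
    ¬ ∃ E : EuclideanSpace ℝ (Fin 2), E 1 ≠ 0 ∧
        Metric.infDist O (line[ℝ, A, E] : Set (EuclideanSpace ℝ (Fin 2))) = r ∧
        Metric.infDist O (line[ℝ, B, E] : Set (EuclideanSpace ℝ (Fin 2))) = r := by
  rintro ⟨E, hE, hAE, hBE⟩
  have hr_sq : r ^ 2 = (f - v) * (f + v) := by
    rw [hr, Real.sq_sqrt (by nlinarith)]
  have hr₀ : 0 < r := by rw [hr]; exact Real.sqrt_pos.2 (by nlinarith)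
  have hO1 : O 1 = r := by simp [hO]
  have slopeA := slope_of_infDist_affineSpan_pair_eq A E O (by simp [hA]) hE (hO1 ▸ hAE)
  have slopeB := slope_of_infDist_affineSpan_pair_eq B E O (by simp [hB]) hE (hO1 ▸ hBE)
  simp only [hA, hB, hO, Matrix.cons_val_zero, Matrix.cons_val_one, Matrix.cons_val_fin_one,
    sub_neg_eq_add] at slopeA slopeB
  have tangentA : r * (E 0 + f) = -(v * E 1) := by
    refine mul_left_cancel₀ (by linarith : 2 * (f - v) ≠ 0) ?_
    linear_combination -slopeA - E 1 * hr_sq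
  have tangentB : r * (E 0 - f) = -(v * E 1) := by
    refine mul_left_cancel₀ (by linarith : 2 * (f + v) ≠ 0) ?_
    linear_combination slopeB + E 1 * hr_sq
  have hfr : r * (2 * f) = 0 := by linear_combination tangentA - tangentB
  exact (mul_pos hr₀ (by linarith)).ne' hfr
end
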